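/- Let (G, φ, β, λ) be a conformal H-minimal Legendrian datum on an open set Ω ⊆ ℝ². Then at every point x ∈ Ω with G(x) ≠ 0: ∇β·∇(arctan σ) + Δ(log 𝔯) = |∇σ|²/(1+σ²)². -/

import Mathlib

open MeasureTheory Real Set
noncomputable section

abbrev R2 : Type := EuclideanSpace ℝ (Fin 2)
abbrev R4 : Type := EuclideanSpace ℝ (Fin 4)

/-- Real inner product on ℝ⁴. -/
def rin (u v : R4) : ℝ := inner ℝ u v

/-- Standard complex structure on ℝ⁴ ≅ ℂ². -/
def Jc (v : R4) : R4 := (WithLp.equiv 2 (Fin 4 → ℝ)).symm ![-v 1, v 0, -v 3, v 2]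

/-- Partial derivative in the j-th coordinate direction. -/
def pd {E : Type*} [NormedAddCommGroup E] [NormedSpace ℝ E]
    (j : Fin 2) (f : R2 → E) (x : R2) : E :=
  fderiv ℝ f x (EuclideanSpace.single j 1)

/-- Flat Laplacian acting componentwise. -/
def lap {E : Type*} [NormedAddCommGroup E] [NormedSpace ℝ E]
    (f : R2 → E) (x : R2) : E :=
  pd 0 (pd 0 f) x + pd 1 (pd 1 f) x

structure HMinimalDatum (Ω : Set R2) (G : R2 → R4) (φ β lam : R2 → ℝ) : Prop where
  isOpen : IsOpen Ω
  smooth_G : ∀ x ∈ Ω, ContDiffAt ℝ (⊤ : ℕ∞) G x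
  smooth_φ : ∀ x ∈ Ω, ContDiffAt ℝ (⊤ : ℕ∞) φ x
  smooth_β : ∀ x ∈ Ω, ContDiffAt ℝ (⊤ : ℕ∞) β x
  smooth_lam : ∀ x ∈ Ω, ContDiffAt ℝ (⊤ : ℕ∞) lam x
  conf_orth : ∀ x ∈ Ω, rin (pd 0 G x) (pd 1 G x) = 0
  conf_norm₁ : ∀ x ∈ Ω, ‖pd 0 G x‖ = Real.exp (lam x)
  conf_norm₂ : ∀ x ∈ Ω, ‖pd 1 G x‖ = Real.exp (lam x)
  lagrangian : ∀ x ∈ Ω, rin (pd 0 G x) (Jc (pd 1 G x)) = 0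
  legendrian : ∀ x ∈ Ω, ∀ j : Fin 2, pd j φ x = rin (G x) (Jc (pd j G x))
  harmonic_β : ∀ x ∈ Ω, lap β x = 0
  hminimal : ∀ x ∈ Ω,
    Jc (lap G x) = (2 * pd 0 β x) • pd 0 G x + (2 * pd 1 β x) • pd 1 G x

/-- The Folland–Korányi gauge composed with the Legendrian immersion. -/
def kGauge (G : R2 → R4) (φ : R2 → ℝ) (x : R2) : ℝ :=
  (‖G x‖ ^ 4 + 4 * φ x ^ 2) ^ ((1:ℝ)/4)

/-- The phase σ = 2φ/ρ². -/
def phase (G : R2 → R4) (φ : R2 → ℝ) (x : R2) : ℝ := 2 * φ x / ‖G x‖ ^ 2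

/-- Dirichlet energy density |∇σ|²/(1+σ²)² of arctan σ. -/
def energyDensity (G : R2 → R4) (φ : R2 → ℝ) (x : R2) : ℝ :=
  ((pd 0 (phase G φ) x) ^ 2 + (pd 1 (phase G φ) x) ^ 2) / (1 + (phase G φ x) ^ 2) ^ 2


lemma Jc_apply (v : R4) (i : Fin 4) : Jc v i = ![-v 1, v 0, -v 3, v 2] i := rfl

lemma rin_expand (u v : R4) : rin u v = u 0 * v 0 + u 1 * v 1 + u 2 * v 2 + u 3 * v 3 := by
  simp [rin, PiLp.inner_apply, Fin.sum_univ_four, RCLike.inner_apply, mul_comm]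

def JL : R4 →ₗ[ℝ] R4 where
  toFun := Jc
  map_add' u v := by
    ext i
    fin_cases i <;> simp [Jc_apply] <;> ring
  map_smul' c v := by
    ext i
    fin_cases i <;> simp [Jc_apply] <;> ring

lemma Jc_eq (v : R4) : Jc v = JL v := rfl

lemma rin_Jc_Jc (u v : R4) : rin (Jc u) (Jc v) = rin u v := by
  simp [rin_expand, Jc_apply]; ring

lemma rin_self_Jc (v : R4) : rin v (Jc v) = 0 := by
  simp [rin_expand, Jc_apply]; ring

lemma Jc_Jc (v : R4) : Jc (Jc v) = -v := by
  ext i; fin_cases i <;> simp [Jc_apply]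

lemma rin_Jc_swap (u v : R4) : rin (Jc u) v = - rin u (Jc v) := by
  simp [rin_expand, Jc_apply]; ring

lemma rin_comm (u v : R4) : rin u v = rin v u := by simp [rin_expand]; ring

lemma rin_add_right (u v w : R4) : rin u (v + w) = rin u v + rin u w := by
  simp [rin, inner_add_right]

lemma rin_smul_right (c : ℝ) (u v : R4) : rin u (c • v) = c * rin u v := by
  simp [rin, inner_smul_right]

lemma rin_neg_right (u v : R4) : rin u (-v) = - rin u v := by
  simp [rin, inner_neg_right]

lemma rin_smul_left (c : ℝ) (u v : R4) : rin (c • u) v = c * rin u v :=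
  real_inner_smul_left u v c

lemma rin_self (v : R4) : rin v v = ‖v‖ ^ 2 := real_inner_self_eq_norm_sq v

section pdlemmas
variable {E : Type*} [NormedAddCommGroup E] [NormedSpace ℝ E]

lemma pd_congr {j : Fin 2} {f g : R2 → E} {x : R2} (h : f =ᶠ[nhds x] g) :
    pd j f x = pd j g x := by
  unfold pd; rw [h.fderiv_eq]

lemma contDiffAt_pd (j : Fin 2) {f : R2 → E} {x : R2} (h : ContDiffAt ℝ (⊤ : ℕ∞) f x) :
    ContDiffAt ℝ (⊤ : ℕ∞) (pd j f) x := by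
  have h1 : ContDiffAt ℝ (⊤ : ℕ∞) (fderiv ℝ f) x := h.fderiv_right (by simp)
  exact (ContinuousLinearMap.apply ℝ E (EuclideanSpace.single j 1)).contDiff.contDiffAt.comp x h1

lemma pd_add {j : Fin 2} {f g : R2 → E} {x : R2} (hf : DifferentiableAt ℝ f x)
    (hg : DifferentiableAt ℝ g x) :
    pd j (fun y => f y + g y) x = pd j f x + pd j g x := by
  unfold pd; rw [fderiv_fun_add hf hg]; rfl

lemma pd_clm {j : Fin 2} {f : R2 → E} {F' : Type*} [NormedAddCommGroup F'] [NormedSpace ℝ F']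
    (L : E →L[ℝ] F') {x : R2} (hf : DifferentiableAt ℝ f x) :
    pd j (fun y => L (f y)) x = L (pd j f x) := by
  have h := (L.hasFDerivAt (x := f x)).comp x hf.hasFDerivAt
  unfold pd
  rw [show (fun y => L (f y)) = (⇑L ∘ f) from rfl, h.fderiv]; rfl

lemma pd_mul {j : Fin 2} {f g : R2 → ℝ} {x : R2} (hf : DifferentiableAt ℝ f x)
    (hg : DifferentiableAt ℝ g x) :
    pd j (fun y => f y * g y) x = pd j f x * g x + f x * pd j g x := by
  unfold pd; rw [fderiv_fun_mul hf hg]; simp; ring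

lemma pd_const_mul {j : Fin 2} {f : R2 → ℝ} {x : R2} (c : ℝ) (hf : DifferentiableAt ℝ f x) :
    pd j (fun y => c * f y) x = c * pd j f x := by
  unfold pd; rw [fderiv_const_mul hf]; simp

lemma pd_comp {j : Fin 2} {f : R2 → ℝ} {g : ℝ → ℝ} {g' : ℝ} {x : R2}
    (hg : HasDerivAt g g' (f x)) (hf : DifferentiableAt ℝ f x) :
    pd j (fun y => g (f y)) x = g' * pd j f x := by
  have h := hg.comp_hasFDerivAt x hf.hasFDerivAt
  unfold pd
  rw [show (fun y => g (f y)) = (g ∘ f) from rfl, h.fderiv]; simp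

lemma pd_div {j : Fin 2} {f g : R2 → ℝ} {x : R2} (hf : DifferentiableAt ℝ f x)
    (hg : DifferentiableAt ℝ g x) (hgx : g x ≠ 0) :
    pd j (fun y => f y / g y) x = (pd j f x * g x - f x * pd j g x) / g x ^ 2 := by
  have h1 : pd j (fun y => f y * (g y)⁻¹) x
      = pd j f x * (g x)⁻¹ + f x * pd j (fun y => (g y)⁻¹) x :=
    pd_mul hf (hg.inv hgx)
  have h2 : pd j (fun y => (g y)⁻¹) x = -((g x)^2)⁻¹ * pd j g x :=
    pd_comp (hasDerivAt_inv hgx) hg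
  have h3 : pd j (fun y => f y / g y) x = pd j (fun y => f y * (g y)⁻¹) x := by
    apply pd_congr; filter_upwards with y; rw [div_eq_mul_inv]
  rw [h3, h1, h2]
  field_simp
  ring

lemma pd_inner {j : Fin 2} {f g : R2 → R4} {x : R2} (hf : DifferentiableAt ℝ f x)
    (hg : DifferentiableAt ℝ g x) :
    pd j (fun y => inner ℝ (f y) (g y)) x =
      inner ℝ (f x) (pd j g x) + inner ℝ (pd j f x) (g x) := by
  unfold pd; rw [fderiv_inner_apply ℝ hf hg]

end pdlemmas

set_option maxHeartbeats 1000000 in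
lemma parseval (e0 e1 g : R4) (E : ℝ) (hE : 0 < E)
    (h00 : rin e0 e0 = E ^ 2) (h11 : rin e1 e1 = E ^ 2)
    (h01 : rin e0 e1 = 0) (hJ : rin e0 (Jc e1) = 0) :
    rin g g * E ^ 2 =
      rin g e0 ^ 2 + rin g e1 ^ 2 + rin g (Jc e0) ^ 2 + rin g (Jc e1) ^ 2 := by
  have hE' : E ≠ 0 := ne_of_gt hE
  set v : Fin 4 → R4 := ![E⁻¹ • e0, E⁻¹ • e1, E⁻¹ • Jc e0, E⁻¹ • Jc e1] with hv
  have d10 : rin e1 e0 = 0 := by rw [rin_comm]; exact h01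
  have d2 : rin e0 (Jc e0) = 0 := rin_self_Jc e0
  have d3 : rin e1 (Jc e1) = 0 := rin_self_Jc e1
  have d4 : rin e1 (Jc e0) = 0 := by rw [rin_comm, rin_Jc_swap, hJ]; ring
  have d5 : rin (Jc e0) (Jc e1) = 0 := by rw [rin_Jc_Jc]; exact h01
  have d6 : rin (Jc e0) (Jc e0) = E ^ 2 := by rw [rin_Jc_Jc]; exact h00
  have d7 : rin (Jc e1) (Jc e1) = E ^ 2 := by rw [rin_Jc_Jc]; exact h11
  have d2' : rin (Jc e0) e0 = 0 := by rw [rin_comm]; exact d2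
  have d3' : rin (Jc e1) e1 = 0 := by rw [rin_comm]; exact d3
  have d4' : rin (Jc e0) e1 = 0 := by rw [rin_comm]; exact d4
  have dJ' : rin (Jc e1) e0 = 0 := by rw [rin_comm]; exact hJ
  have d5' : rin (Jc e1) (Jc e0) = 0 := by rw [rin_comm]; exact d5
  have hon : Orthonormal ℝ v := by
    rw [orthonormal_iff_ite]
    intro i j
    fin_cases i <;> fin_cases j
    all_goals
      try simp only [hv, Matrix.cons_val_zero, Matrix.cons_val_one, Matrix.head_cons,
        Matrix.cons_val_two, Matrix.tail_cons, Matrix.cons_val_three, Fin.mk_zero, Fin.mk_one,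
        show ((⟨2, by omega⟩ : Fin 4)) = (2 : Fin 4) from rfl,
        show ((⟨3, by omega⟩ : Fin 4)) = (3 : Fin 4) from rfl,
        show ∀ (x y : R4), inner ℝ x y = rin x y from fun _ _ => rfl]
    all_goals
      try simp only [rin_smul_left, rin_smul_right,
        h00, h11, h01, hJ, d10, d2, d3, d4, d5, d6, d7, d2', d3', d4', dJ', d5']
    all_goals try norm_num [Fin.ext_iff]
    all_goals try rw [if_neg (by decide)]
    all_goals try norm_num
    all_goals try field_simp
    all_goals try ring
  have hcard : Fintype.card (Fin 4) = Module.finrank ℝ R4 := by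
    simp [finrank_euclideanSpace_fin]
  have bas := basisOfLinearIndependentOfCardEqFinrank hon.linearIndependent hcard
  have hrange : Set.range (⇑(basisOfLinearIndependentOfCardEqFinrank hon.linearIndependent hcard))
      = Set.range v := by rw [coe_basisOfLinearIndependentOfCardEqFinrank]
  have hsp : ⊤ ≤ Submodule.span ℝ (Set.range v) := by
    rw [← hrange]
    exact le_of_eq (basisOfLinearIndependentOfCardEqFinrank hon.linearIndependent hcard).span_eq.symm
  set B : OrthonormalBasis (Fin 4) ℝ R4 := OrthonormalBasis.mk hon hsp with hB
  have hsum := B.sum_inner_mul_inner g g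
  rw [Fin.sum_univ_four] at hsum
  simp only [hB, OrthonormalBasis.coe_mk, hv, Matrix.cons_val_zero, Matrix.cons_val_one,
    Matrix.head_cons, Matrix.cons_val_two, Matrix.tail_cons, Matrix.cons_val_three,
    real_inner_smul_left, real_inner_smul_right] at hsum
  simp only [show ∀ (x y : R4), inner ℝ x y = rin x y from fun _ _ => rfl] at hsum
  have c0 : rin e0 g = rin g e0 := rin_comm _ _
  have c1 : rin e1 g = rin g e1 := rin_comm _ _
  have c2 : rin (Jc e0) g = rin g (Jc e0) := rin_comm _ _
  have c3 : rin (Jc e1) g = rin g (Jc e1) := rin_comm _ _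
  rw [c0, c1, c2, c3] at hsum
  field_simp at hsum
  nlinarith [hsum]



def uF (G : R2 → R4) : R2 → ℝ := fun y => rin (G y) (G y)
def AF (G : R2 → R4) (j : Fin 2) : R2 → ℝ := fun y => rin (G y) (pd j G y)
def wF (G : R2 → R4) (φ : R2 → ℝ) : R2 → ℝ := fun y => uF G y * uF G y + 4 * (φ y * φ y)

lemma Jc_add (u v : R4) : Jc (u + v) = Jc u + Jc v := map_add JL u v
lemma Jc_smul (c : ℝ) (v : R4) : Jc (c • v) = c • Jc v := map_smul JL c v

def JLc : R4 →L[ℝ] R4 := LinearMap.toContinuousLinearMap JL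

lemma lap_congr {E : Type*} [NormedAddCommGroup E] [NormedSpace ℝ E] {f g : R2 → E} {x : R2}
    (h : f =ᶠ[nhds x] g) : lap f x = lap g x := by
  have hfd := h.fderiv (𝕜 := ℝ)
  have h0 : pd 0 f =ᶠ[nhds x] pd 0 g := by
    filter_upwards [hfd] with y hy; unfold pd; rw [hy]
  have h1 : pd 1 f =ᶠ[nhds x] pd 1 g := by
    filter_upwards [hfd] with y hy; unfold pd; rw [hy]
  unfold lap
  rw [pd_congr h0, pd_congr h1]

lemma pd_rin {j : Fin 2} {f g : R2 → R4} {x : R2} (hf : DifferentiableAt ℝ f x)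
    (hg : DifferentiableAt ℝ g x) :
    pd j (fun y => rin (f y) (g y)) x = rin (f x) (pd j g x) + rin (pd j f x) (g x) :=
  pd_inner hf hg

lemma contDiffAt_uF {G : R2 → R4} {x : R2} (h : ContDiffAt ℝ (⊤ : ℕ∞) G x) :
    ContDiffAt ℝ (⊤ : ℕ∞) (uF G) x := ContDiffAt.inner ℝ h h

lemma contDiffAt_AF {G : R2 → R4} {x : R2} (j : Fin 2) (h : ContDiffAt ℝ (⊤ : ℕ∞) G x) :
    ContDiffAt ℝ (⊤ : ℕ∞) (AF G j) x := ContDiffAt.inner ℝ h (contDiffAt_pd j h)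

lemma contDiffAt_wF {G : R2 → R4} {φ : R2 → ℝ} {x : R2} (hG : ContDiffAt ℝ (⊤ : ℕ∞) G x)
    (hφ : ContDiffAt ℝ (⊤ : ℕ∞) φ x) : ContDiffAt ℝ (⊤ : ℕ∞) (wF G φ) x :=
  ((contDiffAt_uF hG).mul (contDiffAt_uF hG)).add (contDiffAt_const.mul (hφ.mul hφ))

lemma pd_uF {G : R2 → R4} {x : R2} (j : Fin 2) (hd : DifferentiableAt ℝ G x) :
    pd j (uF G) x = 2 * AF G j x := by
  have h : pd j (fun y => rin (G y) (G y)) x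
      = rin (G x) (pd j G x) + rin (pd j G x) (G x) := pd_rin hd hd
  show pd j (fun y => rin (G y) (G y)) x = 2 * AF G j x
  rw [h, rin_comm (pd j G x) (G x)]
  unfold AF; ring

lemma pd_AF {G : R2 → R4} {x : R2} (j k : Fin 2) (hd : DifferentiableAt ℝ G x)
    (hd2 : DifferentiableAt ℝ (pd k G) x) :
    pd j (AF G k) x = rin (G x) (pd j (pd k G) x) + rin (pd j G x) (pd k G x) :=
  pd_rin hd hd2

lemma pd_wF {G : R2 → R4} {φ : R2 → ℝ} {x : R2} (j : Fin 2) (hG : ContDiffAt ℝ (⊤ : ℕ∞) G x)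
    (hφ : ContDiffAt ℝ (⊤ : ℕ∞) φ x) :
    pd j (wF G φ) x = 4 * (uF G x * AF G j x) + 8 * (φ x * pd j φ x) := by
  have hdu : DifferentiableAt ℝ (uF G) x := (contDiffAt_uF hG).differentiableAt (by simp)
  have hdφ : DifferentiableAt ℝ φ x := hφ.differentiableAt (by simp)
  have h1 : pd j (wF G φ) x
      = pd j (fun y => uF G y * uF G y) x + pd j (fun y => 4 * (φ y * φ y)) x := by
    show pd j (fun y => uF G y * uF G y + 4 * (φ y * φ y)) x = _
    exact pd_add (hdu.mul hdu) ((differentiableAt_const _).mul (hdφ.mul hdφ))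
  rw [h1, pd_mul hdu hdu, pd_const_mul _ (hdφ.fun_mul hdφ), pd_mul hdφ hdφ,
    pd_uF j (hG.differentiableAt (by simp))]
  ring


set_option maxHeartbeats 2000000 in
/-- The pointwise conservation law (k-6-rep) of the paper in conformal (flat) form:
away from zeros of `G`, `∇β·∇(arctan σ) + Δ(log 𝔯) = |∇σ|²/(1+σ²)²`. -/
theorem pointwise_conservation_law (Ω : Set R2) (G : R2 → R4) (φ β lam : R2 → ℝ)
    (hdat : HMinimalDatum Ω G φ β lam) :
    ∀ x ∈ Ω, G x ≠ 0 →
      (pd 0 β x * pd 0 (fun y => Real.arctan (phase G φ y)) x +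
          pd 1 β x * pd 1 (fun y => Real.arctan (phase G φ y)) x) +
          lap (fun y => Real.log (kGauge G φ y)) x =
        energyDensity G φ x := by
  intro x hx hGx
  have hΩx : Ω ∈ nhds x := hdat.isOpen.mem_nhds hx
  have cG := hdat.smooth_G
  have cφ := hdat.smooth_φ
  have dGx : DifferentiableAt ℝ G x := (cG x hx).differentiableAt (by simp)
  have dφx : DifferentiableAt ℝ φ x := (cφ x hx).differentiableAt (by simp)
  have dpdGx : ∀ j : Fin 2, DifferentiableAt ℝ (pd j G) x :=
    fun j => (contDiffAt_pd j (cG x hx)).differentiableAt (by simp)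
  have dpdφx : ∀ j : Fin 2, DifferentiableAt ℝ (pd j φ) x :=
    fun j => (contDiffAt_pd j (cφ x hx)).differentiableAt (by simp)
  have dAx : ∀ j : Fin 2, DifferentiableAt ℝ (AF G j) x :=
    fun j => (contDiffAt_AF j (cG x hx)).differentiableAt (by simp)
  have dux : DifferentiableAt ℝ (uF G) x := (contDiffAt_uF (cG x hx)).differentiableAt (by simp)
  -- positivity
  have hux : uF G x = ‖G x‖ ^ 2 := rin_self (G x)
  have hu0 : 0 < uF G x := by
    rw [hux]; exact pow_pos (norm_pos_iff.mpr hGx) 2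
  have hune : uF G x ≠ 0 := ne_of_gt hu0
  have hw0 : 0 < wF G φ x := by
    have : wF G φ x = uF G x * uF G x + 4 * (φ x * φ x) := rfl
    nlinarith [mul_self_nonneg (φ x)]
  have hwne : wF G φ x ≠ 0 := ne_of_gt hw0
  -- phase as quotient by uF
  have hphase : phase G φ = fun y => 2 * φ y / uF G y := by
    funext y
    show 2 * φ y / ‖G y‖ ^ 2 = 2 * φ y / uF G y
    rw [show uF G y = ‖G y‖ ^ 2 from rin_self (G y)]
  have dphase : DifferentiableAt ℝ (phase G φ) x := by
    rw [hphase, show (fun y => 2 * φ y / uF G y) = fun y => 2 * φ y * (uF G y)⁻¹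
      from funext fun y => div_eq_mul_inv _ _]
    exact ((differentiableAt_const (2:ℝ)).mul dφx).mul (dux.inv hune)
  have hs : ∀ j : Fin 2, pd j (phase G φ) x
      = (2 * pd j φ x * uF G x - 2 * φ x * (2 * AF G j x)) / uF G x ^ 2 := by
    intro j
    rw [hphase, pd_div ((differentiableAt_const (2:ℝ)).fun_mul dφx) dux hune,
      pd_const_mul _ dφx, pd_uF j dGx]
  have harct : ∀ j : Fin 2, pd j (fun y => Real.arctan (phase G φ y)) x
      = 1 / (1 + phase G φ x ^ 2) * pd j (phase G φ) x :=
    fun j => pd_comp (Real.hasDerivAt_arctan (phase G φ x)) dphase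
  have hphx : phase G φ x = 2 * φ x / uF G x := by rw [hphase]
  -- eventual neighbourhood facts
  have hUpos : ∀ᶠ y in nhds x, 0 < uF G y := by
    have hc : ContinuousAt (uF G) x := (contDiffAt_uF (cG x hx)).continuousAt
    filter_upwards [hc.preimage_mem_nhds (Ioi_mem_nhds hu0)] with y hy
    exact hy
  have hN : ∀ᶠ y in nhds x, y ∈ Ω ∧ 0 < uF G y := by
    filter_upwards [hΩx, hUpos] with y h1 h2
    exact ⟨h1, h2⟩
  -- log of the gauge
  have hlogk : (fun y => Real.log (kGauge G φ y)) =ᶠ[nhds x]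
      fun y => (1/4) * Real.log (wF G φ y) := by
    filter_upwards [hN] with y hy
    obtain ⟨hyΩ, hyu⟩ := hy
    have hwy : 0 < wF G φ y := by
      have : wF G φ y = uF G y * uF G y + 4 * (φ y * φ y) := rfl
      nlinarith [mul_self_nonneg (φ y)]
    have hbase : ‖G y‖ ^ 4 + 4 * φ y ^ 2 = wF G φ y := by
      have h2 : uF G y = ‖G y‖ ^ 2 := rin_self (G y)
      show _ = uF G y * uF G y + 4 * (φ y * φ y)
      rw [h2]; ring
    show Real.log ((‖G y‖ ^ 4 + 4 * φ y ^ 2) ^ ((1:ℝ)/4)) = (1/4) * Real.log (wF G φ y)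
    rw [hbase, Real.log_rpow hwy]
  have hlap1 : lap (fun y => Real.log (kGauge G φ y)) x
      = lap (fun y => (1/4) * Real.log (wF G φ y)) x := lap_congr hlogk
  -- first derivative of (1/4) log w, eventually
  have hpdlog : ∀ j : Fin 2, pd j (fun y => (1/4) * Real.log (wF G φ y))
      =ᶠ[nhds x] fun z => (1/4) * ((wF G φ z)⁻¹ * pd j (wF G φ) z) := by
    intro j
    filter_upwards [hN] with z hz
    obtain ⟨hzΩ, hzu⟩ := hz
    have hwz : 0 < wF G φ z := by
      have : wF G φ z = uF G z * uF G z + 4 * (φ z * φ z) := rfl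
      nlinarith [mul_self_nonneg (φ z)]
    have hdw : DifferentiableAt ℝ (wF G φ) z :=
      (contDiffAt_wF (cG z hzΩ) (cφ z hzΩ)).differentiableAt (by simp)
    have h1 : pd j (fun y => (1/4) * Real.log (wF G φ y)) z
        = (1/4) * pd j (fun y => Real.log (wF G φ y)) z :=
      pd_const_mul _ (hdw.log (ne_of_gt hwz))
    rw [h1, pd_comp (Real.hasDerivAt_log (ne_of_gt hwz)) hdw]
  have hdw_x : DifferentiableAt ℝ (wF G φ) x :=
    (contDiffAt_wF (cG x hx) (cφ x hx)).differentiableAt (by simp)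
  have hdpdw : ∀ j : Fin 2, DifferentiableAt ℝ (pd j (wF G φ)) x :=
    fun j => (contDiffAt_pd j (contDiffAt_wF (cG x hx) (cφ x hx))).differentiableAt (by simp)
  have hdwinv : DifferentiableAt ℝ (fun z => (wF G φ z)⁻¹) x := hdw_x.inv hwne
  have hlap2 : ∀ j : Fin 2, pd j (pd j (fun y => (1/4) * Real.log (wF G φ y))) x
      = (1/4) * ((-((wF G φ x)^2)⁻¹ * pd j (wF G φ) x) * pd j (wF G φ) x
          + (wF G φ x)⁻¹ * pd j (pd j (wF G φ)) x) := by
    intro j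
    have hinv : pd j (fun z => (wF G φ z)⁻¹) x = -((wF G φ x)^2)⁻¹ * pd j (wF G φ) x :=
      pd_comp (hasDerivAt_inv hwne) hdw_x
    rw [pd_congr (hpdlog j), pd_const_mul _ (hdwinv.fun_mul (hdpdw j)),
      pd_mul hdwinv (hdpdw j), hinv]
  -- second derivative of w at x
  have hpdw_ev : ∀ j : Fin 2, pd j (wF G φ)
      =ᶠ[nhds x] fun z => 4 * (uF G z * AF G j z) + 8 * (φ z * pd j φ z) := by
    intro j
    filter_upwards [hΩx] with z hzΩ
    exact pd_wF j (cG z hzΩ) (cφ z hzΩ)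
  have hpdpdw : ∀ j : Fin 2, pd j (pd j (wF G φ)) x
      = 4 * ((2 * AF G j x) * AF G j x
          + uF G x * (rin (G x) (pd j (pd j G) x) + rin (pd j G x) (pd j G x)))
        + 8 * (pd j φ x * pd j φ x + φ x * pd j (pd j φ) x) := by
    intro j
    rw [pd_congr (hpdw_ev j)]
    rw [pd_add ((differentiableAt_const (4:ℝ)).fun_mul (dux.fun_mul (dAx j)))
      ((differentiableAt_const (8:ℝ)).fun_mul (dφx.fun_mul (dpdφx j)))]
    rw [pd_const_mul _ (dux.fun_mul (dAx j)), pd_mul dux (dAx j),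
      pd_const_mul _ (dφx.fun_mul (dpdφx j)), pd_mul dφx (dpdφx j),
      pd_uF j dGx, pd_AF j j dGx (dpdGx j)]
    try ring
  -- second derivative of φ at x
  have hpdφ_ev : ∀ j : Fin 2, pd j φ =ᶠ[nhds x] fun z => rin (G z) (Jc (pd j G z)) := by
    intro j
    filter_upwards [hΩx] with z hzΩ
    exact hdat.legendrian z hzΩ j
  have hpdpdφ : ∀ j : Fin 2, pd j (pd j φ) x = rin (G x) (Jc (pd j (pd j G) x)) := by
    intro j
    rw [pd_congr (hpdφ_ev j)]
    have hdJ : DifferentiableAt ℝ (fun z => Jc (pd j G z)) x :=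
      JLc.differentiableAt.comp x (dpdGx j)
    have h : pd j (fun z => rin (G z) (Jc (pd j G z))) x
        = rin (G x) (pd j (fun z => Jc (pd j G z)) x) + rin (pd j G x) (Jc (pd j G x)) :=
      pd_rin (f := G) (g := fun z => Jc (pd j G z)) dGx hdJ
    have hJc : pd j (fun z => Jc (pd j G z)) x = Jc (pd j (pd j G) x) :=
      pd_clm JLc (dpdGx j)
    rw [h, hJc, rin_self_Jc]
    ring
  -- geometric identities at x
  have he0 : rin (pd 0 G x) (pd 0 G x) = Real.exp (lam x) ^ 2 := by
    rw [rin_self, hdat.conf_norm₁ x hx]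
  have he1 : rin (pd 1 G x) (pd 1 G x) = Real.exp (lam x) ^ 2 := by
    rw [rin_self, hdat.conf_norm₂ x hx]
  have hb : ∀ j : Fin 2, rin (G x) (Jc (pd j G x)) = pd j φ x :=
    fun j => (hdat.legendrian x hx j).symm
  have hmin := hdat.hminimal x hx
  have hGJlap : rin (G x) (Jc (lap G x))
      = 2 * pd 0 β x * AF G 0 x + 2 * pd 1 β x * AF G 1 x := by
    rw [hmin, rin_add_right, rin_smul_right, rin_smul_right]
    show _ = 2 * pd 0 β x * rin (G x) (pd 0 G x) + 2 * pd 1 β x * rin (G x) (pd 1 G x)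
    ring
  have hGlap : rin (G x) (lap G x)
      = -(2 * pd 0 β x * pd 0 φ x + 2 * pd 1 β x * pd 1 φ x) := by
    have h1 : lap G x = - Jc (Jc (lap G x)) := by rw [Jc_Jc, neg_neg]
    rw [h1, hmin, Jc_add, Jc_smul, Jc_smul, rin_neg_right, rin_add_right,
      rin_smul_right, rin_smul_right, hb 0, hb 1]
  have hsumg : rin (G x) (pd 0 (pd 0 G) x) + rin (G x) (pd 1 (pd 1 G) x)
      = rin (G x) (lap G x) := by
    rw [show lap G x = pd 0 (pd 0 G) x + pd 1 (pd 1 G) x from rfl, rin_add_right]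
  have hsumh : rin (G x) (Jc (pd 0 (pd 0 G) x)) + rin (G x) (Jc (pd 1 (pd 1 G) x))
      = rin (G x) (Jc (lap G x)) := by
    rw [show lap G x = pd 0 (pd 0 G) x + pd 1 (pd 1 G) x from rfl, Jc_add, rin_add_right]
  -- Parseval
  have hkey := parseval (pd 0 G x) (pd 1 G x) (G x) (Real.exp (lam x)) (Real.exp_pos _)
    he0 he1 (hdat.conf_orth x hx) (hdat.lagrangian x hx)
  rw [hb 0, hb 1] at hkey
  have hkey' : uF G x * Real.exp (lam x) ^ 2
      = AF G 0 x ^ 2 + AF G 1 x ^ 2 + pd 0 φ x ^ 2 + pd 1 φ x ^ 2 := hkey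
  -- assemble
  have hgval : rin (G x) (pd 0 (pd 0 G) x) + rin (G x) (pd 1 (pd 1 G) x)
      = -(2 * pd 0 β x * pd 0 φ x + 2 * pd 1 β x * pd 1 φ x) := by rw [hsumg, hGlap]
  have hhval : rin (G x) (Jc (pd 0 (pd 0 G) x)) + rin (G x) (Jc (pd 1 (pd 1 G) x))
      = 2 * pd 0 β x * AF G 0 x + 2 * pd 1 β x * AF G 1 x := by rw [hsumh, hGJlap]
  have hg1 : rin (G x) (pd 1 (pd 1 G) x)
      = -(2 * pd 0 β x * pd 0 φ x + 2 * pd 1 β x * pd 1 φ x)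
        - rin (G x) (pd 0 (pd 0 G) x) := by linarith
  have hh1 : rin (G x) (Jc (pd 1 (pd 1 G) x))
      = 2 * pd 0 β x * AF G 0 x + 2 * pd 1 β x * AF G 1 x
        - rin (G x) (Jc (pd 0 (pd 0 G) x)) := by linarith
  have hE2 : Real.exp (lam x) ^ 2
      = (AF G 0 x ^ 2 + AF G 1 x ^ 2 + pd 0 φ x ^ 2 + pd 1 φ x ^ 2) / uF G x := by
    rw [eq_div_iff hune]; linarith
  have hwval : wF G φ x = uF G x * uF G x + 4 * (φ x * φ x) := rfl
  have hengval : energyDensity G φ x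
      = ((pd 0 (phase G φ) x) ^ 2 + (pd 1 (phase G φ) x) ^ 2)
        / (1 + (phase G φ x) ^ 2) ^ 2 := rfl
  rw [hlap1,
    show lap (fun y => (1/4) * Real.log (wF G φ y)) x
      = pd 0 (pd 0 (fun y => (1/4) * Real.log (wF G φ y))) x
        + pd 1 (pd 1 (fun y => (1/4) * Real.log (wF G φ y))) x from rfl,
    hlap2 0, hlap2 1, hpdpdw 0, hpdpdw 1, hpdpdφ 0, hpdpdφ 1,
    pd_wF 0 (cG x hx) (cφ x hx), pd_wF 1 (cG x hx) (cφ x hx),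
    he0, he1, hengval, harct 0, harct 1, hs 0, hs 1, hphx, hwval,
    hg1, hh1, hE2]
  have ht1 : uF G x * uF G x + 4 * (φ x * φ x) ≠ 0 := by nlinarith [mul_self_nonneg (φ x)]
  have ht2 : uF G x ^ 2 + φ x ^ 2 * 4 ≠ 0 := by nlinarith [sq_nonneg (φ x)]
  have ht3 : uF G x ^ 2 * φ x ^ 2 * 8 + uF G x ^ 4 + φ x ^ 4 * 16 ≠ 0 := by
    nlinarith [sq_nonneg (φ x), sq_nonneg (uF G x), sq_nonneg (uF G x ^ 2 + φ x ^ 2 * 4), sq_nonneg (uF G x * φ x)]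
  field_simp [ht1, ht2, ht3]
  ring
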